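/- Let X and Y be real Banach spaces and let U : X → Y be a bijection which is locally isometric, i.e. every x ∈ X has an open neighborhood V such that U restricted to V is isometric. If the inverse map U⁻¹ : Y → X is continuous, then U is an isometry: ‖U(x) − U(y)‖ = ‖x − y‖ for all x, y ∈ X. -/

import Mathlib

/-!
A map on a real normed space which is locally isometric is `1`-Lipschitz: along a segment
`t ↦ x + t • (y - x)`, the set of parameters `t` at which
`dist (f x) (f (x + t • (y - x))) ≤ t * ‖y - x‖` holds is closed, and the local isometry makes it
contain a right neighbourhood of each of its points, so it contains `[0, 1]`. Continuity of `U⁻¹`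
makes `U⁻¹` locally isometric too, hence also `1`-Lipschitz, and the two inequalities give `‖U x - U y‖ = ‖x - y‖`.
-/

open Set Filter Topology NNReal

section EventuallyLipschitz

variable {α β : Type*} [PseudoMetricSpace α] [PseudoMetricSpace β] {K : ℝ≥0}

theorem continuousAt_of_eventually_dist_le {f : α → β} {x : α}
    (h : ∀ᶠ y in 𝓝 x, dist (f x) (f y) ≤ K * dist x y) : ContinuousAt f x := by
  obtain ⟨r, hr, hball⟩ := Metric.eventually_nhds_iff.1 h
  refine continuousAt_of_locally_lipschitz hr K fun y hy => ?_
  rw [dist_comm (f y), dist_comm y]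
  exact hball hy

theorem LipschitzWith.of_eventually_dist_le_of_real {φ : ℝ → β}
    (h : ∀ t, ∀ᶠ s in 𝓝 t, dist (φ t) (φ s) ≤ K * dist t s) : LipschitzWith K φ := by
  have hφ : Continuous φ :=
    continuous_iff_continuousAt.2 fun t => continuousAt_of_eventually_dist_le (h t)
  suffices key : ∀ a b, a ≤ b → dist (φ a) (φ b) ≤ K * (b - a) by
    refine LipschitzWith.of_dist_le_mul fun a b => ?_
    rcases le_total a b with hab | hba
    · rw [Real.dist_eq, abs_sub_comm, abs_of_nonneg (sub_nonneg.2 hab)]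
      exact key a b hab
    · rw [dist_comm, Real.dist_eq, abs_of_nonneg (sub_nonneg.2 hba)]
      exact key b a hba
  intro a b hab
  let S := {t | dist (φ a) (φ t) ≤ K * (t - a)}
  have hS : IsClosed S := isClosed_le (by fun_prop) (by fun_prop)
  have hstep : ∀ t ∈ S ∩ Ico a b, S ∈ 𝓝[>] t := by
    rintro t ⟨ht, -⟩
    filter_upwards [nhdsWithin_le_nhds (h t), self_mem_nhdsWithin] with s hs hts
    calc dist (φ a) (φ s) ≤ dist (φ a) (φ t) + dist (φ t) (φ s) := dist_triangle _ _ _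
      _ ≤ K * (t - a) + K * (s - t) := by
        rw [Real.dist_eq, abs_sub_comm, abs_of_pos (sub_pos.2 hts)] at hs
        exact add_le_add ht hs
      _ = K * (s - a) := by ring
  exact hS.inter isClosed_Icc |>.Icc_subset_of_forall_mem_nhdsWithin (by simp [S]) hstep
    ⟨hab, le_rfl⟩

end EventuallyLipschitz

theorem LipschitzWith.of_eventually_dist_le {E β : Type*} [SeminormedAddCommGroup E]
    [NormedSpace ℝ E] [PseudoMetricSpace β] {K : ℝ≥0} {f : E → β}
    (h : ∀ x, ∀ᶠ y in 𝓝 x, dist (f x) (f y) ≤ K * dist x y) : LipschitzWith K f := by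
  refine LipschitzWith.of_dist_le_mul fun x y => ?_
  let γ : ℝ → E := AffineMap.lineMap x y
  have hγ : Continuous γ := AffineMap.lineMap_continuous
  have hfγ : LipschitzWith (K * nndist x y) (f ∘ γ) := by
    refine LipschitzWith.of_eventually_dist_le_of_real fun t => ?_
    filter_upwards [hγ.continuousAt.eventually (h (γ t))] with s hs
    calc dist (f (γ t)) (f (γ s)) ≤ K * dist (γ t) (γ s) := hs
      _ = ↑(K * nndist x y) * dist t s := by
        rw [dist_lineMap_lineMap, NNReal.coe_mul, coe_nndist]; ring
  simpa [γ] using hfγ.dist_le_mul 0 1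

def IsLocallyIsometric {α β : Type*} [PseudoMetricSpace α] [PseudoMetricSpace β] (f : α → β) :
    Prop :=
  ∀ x, ∃ V : Set α, IsOpen V ∧ x ∈ V ∧ ∀ u ∈ V, ∀ v ∈ V, dist (f u) (f v) = dist u v

namespace IsLocallyIsometric

theorem lipschitzWith_one {E β : Type*} [SeminormedAddCommGroup E] [NormedSpace ℝ E]
    [PseudoMetricSpace β] {f : E → β} (hf : IsLocallyIsometric f) : LipschitzWith 1 f := by
  refine LipschitzWith.of_eventually_dist_le fun x => ?_
  obtain ⟨V, hVo, hxV, hV⟩ := hf x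
  filter_upwards [hVo.mem_nhds hxV] with y hy
  rw [hV x hxV y hy, NNReal.coe_one, one_mul]

theorem of_rightInverse {α β : Type*} [PseudoMetricSpace α] [PseudoMetricSpace β] {f : α → β}
    {g : β → α} (hf : IsLocallyIsometric f) (hg : Continuous g)
    (hfg : Function.RightInverse g f) : IsLocallyIsometric g := by
  intro y
  obtain ⟨V, hVo, hyV, hV⟩ := hf (g y)
  refine ⟨g ⁻¹' V, hVo.preimage hg, hyV, fun a ha b hb => ?_⟩
  rw [← hV _ ha _ hb, hfg a, hfg b]

end IsLocallyIsometric

theorem locally_isometric_bijection_continuous_inverse_is_isometry_general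
    {X Y : Type*} [NormedAddCommGroup X] [NormedSpace ℝ X]
    [NormedAddCommGroup Y] [NormedSpace ℝ Y]
    (U : X → Y) (Uinv : Y → X)
    (hleft : Function.LeftInverse Uinv U) (hright : Function.RightInverse Uinv U)
    (hloc : ∀ x : X, ∃ V : Set X, IsOpen V ∧ x ∈ V ∧
      ∀ u ∈ V, ∀ v ∈ V, ‖U u - U v‖ = ‖u - v‖)
    (hcont : Continuous Uinv) :
    ∀ x y : X, ‖U x - U y‖ = ‖x - y‖ := by
  have hU : IsLocallyIsometric U := by simpa only [IsLocallyIsometric, dist_eq_norm] using hloc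
  have hUinv : IsLocallyIsometric Uinv := hU.of_rightInverse hcont hright
  intro x y
  simp only [← dist_eq_norm]
  refine le_antisymm (by simpa using hU.lipschitzWith_one.dist_le_mul x y) ?_
  calc dist x y = dist (Uinv (U x)) (Uinv (U y)) := by rw [hleft x, hleft y]
    _ ≤ dist (U x) (U y) := by simpa using hUinv.lipschitzWith_one.dist_le_mul (U x) (U y)

/-- Corollary: a locally isometric bijection between real Banach spaces with continuous
inverse is a global isometry. -/
theorem locally_isometric_bijection_continuous_inverse_is_isometry
    {X Y : Type*} [NormedAddCommGroup X] [NormedSpace ℝ X] [CompleteSpace X]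
    [NormedAddCommGroup Y] [NormedSpace ℝ Y] [CompleteSpace Y]
    (U : X → Y) (Uinv : Y → X)
    (hleft : Function.LeftInverse Uinv U) (hright : Function.RightInverse Uinv U)
    (hloc : ∀ x : X, ∃ V : Set X, IsOpen V ∧ x ∈ V ∧
      ∀ u ∈ V, ∀ v ∈ V, ‖U u - U v‖ = ‖u - v‖)
    (hcont : Continuous Uinv) :
    ∀ x y : X, ‖U x - U y‖ = ‖x - y‖ :=
  locally_isometric_bijection_continuous_inverse_is_isometry_general U Uinv hleft hright hloc hcont
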